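/- arXiv:0705.1532 — 4 statements merged into one kernel-verified Lean document; each statement's English description precedes it below -/
import Mathlib

section
/- Define polynomials τ_n by τ₀(u)=1, τ₁(u)=u and τ_{n+1} = (1/n)·Dτ_n for n ≥ 1, where (Dp)(u) = (1−u²)·p′(u). Then: (1) for every u ∈ [−1,1] there is δ > 0 such that for all real d with |d| < δ one has (u + tanh d)/(1 + u·tanh d) = Σ_{n=0}^{∞} τ_{n+1}(u)·d^n, the series converging absolutely; (2) τ_n has degree exactly n for every n; (3) for every n ≥ 1 and every real z, τ_n(tanh z) = (1/(n−1)!)·(d/dz)^{n−1}(tanh z). -/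
open Polynomial

/-- The operator `D` on polynomials: `(Dp)(u) = (1 - u²)·p′(u)`. -/
noncomputable def Dop (p : Polynomial ℝ) : Polynomial ℝ := (1 - X ^ 2) * derivative p

/-- The polynomials τ_n: τ₀ = 1, τ₁ = X, τ_{n+1} = (1/n)·D τ_n for n ≥ 1. -/
noncomputable def tau : ℕ → Polynomial ℝ
  | 0 => 1
  | 1 => X
  | n + 2 => (((n + 1 : ℕ) : ℝ))⁻¹ • Dop (tau (n + 1))

/-!
Since `tanh' = 1 - tanh²`, the chain rule gives `(p ∘ tanh)' = (D p) ∘ tanh`, so by induction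
`τ_{n+1} ∘ tanh = tanh⁽ⁿ⁾ / n!`. Hence `τ_{n+1}(u)` is the `n`-th Taylor coefficient of `tanh` at
`artanh u`, and for `|u| < 1` the expansion follows from the analyticity of `tanh` and the addition
formula `tanh (z + d) = (tanh z + tanh d) / (1 + tanh z · tanh d)`. For `u = ±1` every `τ_{n+2}`
vanishes at `u` because of the factor `1 - u²`, and the Möbius map fixes `u`.
-/

section TaylorSeries

variable {𝕜 : Type*} [NontriviallyNormedField 𝕜] [CompleteSpace 𝕜] [CharZero 𝕜]

theorem AnalyticAt.exists_hasSum_taylorSeries {f : 𝕜 → 𝕜} {x : 𝕜} (hf : AnalyticAt 𝕜 f x) :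
    ∃ δ > (0 : ℝ), ∀ d : 𝕜, ‖d‖ < δ →
      HasSum (fun n ↦ iteratedDeriv n f x / n.factorial * d ^ n) (f (x + d)) ∧
      Summable (fun n ↦ ‖iteratedDeriv n f x / n.factorial * d ^ n‖) := by
  obtain ⟨r, hr⟩ := hf.hasFPowerSeriesAt
  obtain ⟨δ, hδ0, hδr⟩ := ENNReal.lt_iff_exists_nnreal_btwn.1 hr.r_pos
  refine ⟨δ, NNReal.coe_pos.2 (ENNReal.coe_pos.1 hδ0), fun d hd ↦ ?_⟩
  have hd_mem : d ∈ Metric.eball (0 : 𝕜) r := by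
    rw [mem_eball_zero_iff]
    exact lt_trans (by exact_mod_cast hd) hδr
  have hterm : ∀ n, FormalMultilinearSeries.ofScalars 𝕜
      (fun n ↦ iteratedDeriv n f x / n.factorial) n (fun _ ↦ d) =
      iteratedDeriv n f x / n.factorial * d ^ n := fun n ↦
    (FormalMultilinearSeries.ofScalars_apply_eq ..).trans (smul_eq_mul ..)
  refine ⟨funext hterm ▸ hr.hasSum hd_mem, ?_⟩
  simpa only [hterm] using
    FormalMultilinearSeries.summable_norm_apply _ (Metric.eball_subset_eball hr.r_le hd_mem)

end TaylorSeries

namespace Real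

theorem tanh_add (x y : ℝ) : tanh (x + y) = (tanh x + tanh y) / (1 + tanh x * tanh y) := by
  have hx := (cosh_pos x).ne'
  have hy := (cosh_pos y).ne'
  have hxy : cosh x * cosh y + sinh x * sinh y ≠ 0 := by
    rw [← cosh_add]; exact (cosh_pos _).ne'
  rw [tanh_eq_sinh_div_cosh, tanh_eq_sinh_div_cosh, tanh_eq_sinh_div_cosh, sinh_add, cosh_add]
  field_simp

theorem hasDerivAt_tanh (x : ℝ) : HasDerivAt tanh (1 - tanh x ^ 2) x := by
  have h := (hasDerivAt_sinh x).div (hasDerivAt_cosh x) (cosh_pos x).ne'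
  rw [show sinh / cosh = tanh from funext fun y ↦ (tanh_eq_sinh_div_cosh y).symm] at h
  refine h.congr_deriv ?_
  have hc := (cosh_pos x).ne'
  rw [tanh_eq_sinh_div_cosh]
  field_simp

theorem analyticAt_tanh (x : ℝ) : AnalyticAt ℝ tanh x := by
  rw [show tanh = fun y ↦ sinh y / cosh y from funext tanh_eq_sinh_div_cosh]
  exact contDiff_sinh.contDiffAt.analyticAt.div contDiff_cosh.contDiffAt.analyticAt
    (cosh_pos x).ne'

end Real

theorem tau_succ_succ (n : ℕ) : tau (n + 2) = ((n + 1 : ℕ) : ℝ)⁻¹ • Dop (tau (n + 1)) := rfl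

theorem degree_tau : ∀ n : ℕ, (tau n).degree = n
  | 0 => degree_one
  | 1 => degree_X
  | n + 2 => by
    have hτ : (tau (n + 1)).natDegree = n + 1 := natDegree_eq_of_degree_eq_some (degree_tau (n + 1))
    have hderiv : (derivative (tau (n + 1))).degree = n := by
      rw [degree_derivative (by omega), hτ]
      rfl
    have hquad : (1 - X ^ 2 : ℝ[X]).degree = 2 := by compute_degree!
    rw [tau_succ_succ, smul_eq_C_mul, degree_mul, degree_C (by positivity), Dop, degree_mul,
      hquad, hderiv, zero_add]
    push_cast
    rw [add_comm]

theorem hasDerivAt_eval_comp_tanh (p : ℝ[X]) (z : ℝ) :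
    HasDerivAt (fun w ↦ p.eval (Real.tanh w)) ((Dop p).eval (Real.tanh z)) z := by
  have h := (p.hasDerivAt (Real.tanh z)).comp z (Real.hasDerivAt_tanh z)
  simpa only [Dop, eval_mul, eval_sub, eval_one, eval_pow, eval_X, mul_comm, Function.comp_def]
    using h

theorem iteratedDeriv_tanh (n : ℕ) (z : ℝ) :
    iteratedDeriv n Real.tanh z = n.factorial * (tau (n + 1)).eval (Real.tanh z) := by
  induction n generalizing z with
  | zero => simp [tau]
  | succ n ih =>
    rw [iteratedDeriv_succ, funext ih,
      ((hasDerivAt_eval_comp_tanh (tau (n + 1)) z).const_mul _).deriv, tau_succ_succ,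
      eval_smul, smul_eq_mul, Nat.factorial_succ]
    have : ((n + 1 : ℕ) : ℝ) ≠ 0 := by positivity
    push_cast
    field_simp

theorem eval_tau_succ_eq_iteratedDeriv_tanh (n : ℕ) (z : ℝ) :
    (tau (n + 1)).eval (Real.tanh z) = iteratedDeriv n Real.tanh z / n.factorial := by
  rw [iteratedDeriv_tanh, mul_div_cancel_left₀ _ (by positivity)]

theorem exists_hasSum_eval_tau_mul_pow {u : ℝ} (hu : u ∈ Set.Ioo (-1) 1) :
    ∃ δ > (0 : ℝ), ∀ d : ℝ, |d| < δ →
      HasSum (fun n ↦ (tau (n + 1)).eval u * d ^ n) ((u + Real.tanh d) / (1 + u * Real.tanh d)) ∧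
      Summable (fun n ↦ |(tau (n + 1)).eval u * d ^ n|) := by
  obtain ⟨δ, hδ, hsum⟩ := (Real.analyticAt_tanh (Real.artanh u)).exists_hasSum_taylorSeries
  refine ⟨δ, hδ, fun d hd ↦ ?_⟩
  simpa only [← eval_tau_succ_eq_iteratedDeriv_tanh, Real.tanh_artanh hu, Real.tanh_add,
    Real.norm_eq_abs] using hsum d hd

theorem eval_tau_add_two_of_sq_eq_one {u : ℝ} (hu : u ^ 2 = 1) (n : ℕ) :
    (tau (n + 2)).eval u = 0 := by
  simp [tau_succ_succ, Dop, hu]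

theorem hasSum_eval_tau_mul_pow_of_sq_eq_one {u : ℝ} (hu : u ^ 2 = 1) (d : ℝ) :
    HasSum (fun n ↦ (tau (n + 1)).eval u * d ^ n) ((u + Real.tanh d) / (1 + u * Real.tanh d)) ∧
      Summable (fun n ↦ |(tau (n + 1)).eval u * d ^ n|) := by
  have hvanish : ∀ n ≠ 0, (tau (n + 1)).eval u * d ^ n = 0 := by
    rintro (_ | n) hn
    · exact absurd rfl hn
    · rw [eval_tau_add_two_of_sq_eq_one hu, zero_mul]
  have hfix : (u + Real.tanh d) / (1 + u * Real.tanh d) = u := by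
    have ht := abs_lt.1 (Real.abs_tanh_lt_one d)
    have hpos : 0 < 1 + u * Real.tanh d := by nlinarith [sq_nonneg (u + Real.tanh d)]
    rw [div_eq_iff hpos.ne']
    linear_combination -Real.tanh d * hu
  refine ⟨?_, (hasSum_single 0 fun n hn ↦ by rw [hvanish n hn, abs_zero]).summable⟩
  rw [hfix]
  simpa [tau] using hasSum_single 0 hvanish

theorem stmt_0 :
    (∀ u : ℝ, u ∈ Set.Icc (-1 : ℝ) 1 → ∃ δ > (0 : ℝ), ∀ d : ℝ, |d| < δ →
      HasSum (fun n : ℕ => (tau (n + 1)).eval u * d ^ n)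
        ((u + Real.tanh d) / (1 + u * Real.tanh d)) ∧
      Summable (fun n : ℕ => |(tau (n + 1)).eval u * d ^ n|)) ∧
    (∀ n : ℕ, (tau n).degree = (n : WithBot ℕ)) ∧
    (∀ n : ℕ, 1 ≤ n → ∀ z : ℝ,
      (tau n).eval (Real.tanh z)
        = (1 / (Nat.factorial (n - 1) : ℝ)) * iteratedDeriv (n - 1) Real.tanh z) := by
  refine ⟨fun u hu ↦ ?_, degree_tau, fun n hn z ↦ ?_⟩
  · rcases Set.eq_endpoints_or_mem_Ioo_of_mem_Icc hu with rfl | rfl | hint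
    iterate 2 exact ⟨1, one_pos, fun d _ ↦ hasSum_eval_tau_mul_pow_of_sq_eq_one (by norm_num) d⟩
    exact exists_hasSum_eval_tau_mul_pow hint
  · obtain ⟨m, rfl⟩ := Nat.exists_eq_add_of_le' hn
    rw [Nat.add_sub_cancel, eval_tau_succ_eq_iteratedDeriv_tanh, one_div_mul_eq_div]
end

section
/- Let ε(d) = (1/2)·sinh(2d), viewed as a formal power series in d. There exists a unique sequence (A_{2n+1})_{n≥0} of odd real polynomials with A₁(u) = u, deg A_{2n+1} ≤ 2n+1, and A_{2n+1}(1) = A_{2n+1}(−1) = 0 for all n ≥ 1, such that the polynomial series A(d,u) = Σ_{n≥0} A_{2n+1}(u)·d^{2n} satisfies sinh(dD)A = ε(d)·(1 − A(d,u)²) as an identity of formal power series in d with polynomial coefficients (equivalently, expanding formally in d, A(d, T^+(d,u)) − A(d, T^−(d,u)) = 2ε(d)·(1 − A(d,u)²)). -/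
open Polynomial Classical

/-- Coefficient of `z^i` in `sinh z`. -/
noncomputable def sinhCoeff (i : ℕ) : ℝ := if Odd i then ((Nat.factorial i : ℝ))⁻¹ else 0

/-- Coefficient of `d^j` in `ε(d) = (1/2)·sinh(2d)`. -/
noncomputable def epsCoeff (j : ℕ) : ℝ :=
  if Odd j then (2 : ℝ) ^ j / (2 * (Nat.factorial j : ℝ)) else 0

/-- The polynomial series `A(d,u) = Σ_n A_{2n+1}(u) d^{2n}`: its `d^m`-coefficient. -/
noncomputable def seriesOfA (A : ℕ → Polynomial ℝ) (m : ℕ) : Polynomial ℝ :=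
  if m % 2 = 0 then A (m / 2) else 0

/-- The `d^k`-coefficient of the polynomial series `1 - A(d,u)²`. -/
noncomputable def oneMinusSq (A : ℕ → Polynomial ℝ) (k : ℕ) : Polynomial ℝ :=
  (if k = 0 then 1 else 0) - ∑ i ∈ Finset.range (k + 1), seriesOfA A i * seriesOfA A (k - i)

/-- `A = (A_{2n+1})` is the formal solution of the discretized logistic equation:
`A₁ = u`, the `A_{2n+1}` are odd polynomials of degree at most `2n+1` vanishing at `±1`
for `n ≥ 1`, and `sinh(dD) A = ε(d)·(1 - A²)` coefficientwise in `d`. -/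
noncomputable def IsFormalSolution (A : ℕ → Polynomial ℝ) : Prop :=
  A 0 = X ∧
  (∀ n : ℕ, (A n).degree ≤ ((2 * n + 1 : ℕ) : WithBot ℕ)) ∧
  (∀ n : ℕ, ∀ x : ℝ, (A n).eval (-x) = -(A n).eval x) ∧
  (∀ n : ℕ, 1 ≤ n → (A n).eval 1 = 0 ∧ (A n).eval (-1) = 0) ∧
  (∀ m : ℕ,
    ∑ i ∈ Finset.range (m + 1), sinhCoeff i • Dop^[i] (seriesOfA A (m - i))
      = ∑ j ∈ Finset.range (m + 1), epsCoeff j • oneMinusSq A (m - j))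

/-!
Write `A n` for `A_{2n+1}` and `L p = D p + 2 u p`. By parity the coefficients of even powers of
`d` in the equation vanish identically, and since `A 0 = u`, for `n ≥ 1` the coefficient of
`d^{2n+1}` reads `L (A n) = F_n`, where `F_n` involves only `A 0, …, A (n - 1)`.

`L` satisfies `L ((1 - u²) q) = (u² - 1)² q'`, so its kernel is spanned by the even polynomial
`1 - u²`; this gives uniqueness among odd polynomials. For existence one checks inductively that
`F_n` is even, of degree at most `2n + 2`, and has double roots at `±1`. Then `F_n = (u² - 1)² S`
with `S` even of degree at most `2n - 2`, and `A n = (1 - u²) ∫₀ᵘ S` is odd, of degree at most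
`2n + 1`, and vanishes at `±1`.
-/

namespace LogisticSeries

section Parity

variable {R : Type*} [CommRing R]

def IsEvenPoly (p : R[X]) : Prop := p.comp (-X) = p

def IsOddPoly (p : R[X]) : Prop := p.comp (-X) = -p

lemma isOddPoly_X : IsOddPoly (X : R[X]) := X_comp

lemma isEvenPoly_one_sub_X_sq : IsEvenPoly (1 - X ^ 2 : R[X]) := by
  simp [IsEvenPoly]

lemma IsEvenPoly.add {p q : R[X]} (hp : IsEvenPoly p) (hq : IsEvenPoly q) :
    IsEvenPoly (p + q) := by
  rw [IsEvenPoly, add_comp, hp, hq]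

lemma IsEvenPoly.sub {p q : R[X]} (hp : IsEvenPoly p) (hq : IsEvenPoly q) :
    IsEvenPoly (p - q) := by
  rw [IsEvenPoly, sub_comp, hp, hq]

lemma IsEvenPoly.neg {p : R[X]} (hp : IsEvenPoly p) : IsEvenPoly (-p) := by
  rw [IsEvenPoly, neg_comp, hp]

lemma IsEvenPoly.smul {p : R[X]} (hp : IsEvenPoly p) (c : R) : IsEvenPoly (c • p) := by
  rw [IsEvenPoly, smul_comp, hp]

lemma isEvenPoly_sum {ι : Type*} (s : Finset ι) {f : ι → R[X]}
    (hf : ∀ i ∈ s, IsEvenPoly (f i)) : IsEvenPoly (∑ i ∈ s, f i) := by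
  rw [IsEvenPoly, sum_comp]
  exact Finset.sum_congr rfl hf

lemma IsEvenPoly.mul {p q : R[X]} (hp : IsEvenPoly p) (hq : IsEvenPoly q) :
    IsEvenPoly (p * q) := by
  rw [IsEvenPoly, mul_comp, hp, hq]

lemma IsOddPoly.mul {p q : R[X]} (hp : IsOddPoly p) (hq : IsOddPoly q) : IsEvenPoly (p * q) := by
  rw [IsEvenPoly, mul_comp, hp, hq, neg_mul_neg]

lemma IsEvenPoly.mul_isOddPoly {p q : R[X]} (hp : IsEvenPoly p) (hq : IsOddPoly q) :
    IsOddPoly (p * q) := by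
  rw [IsOddPoly, mul_comp, hp, hq, mul_neg]

lemma IsOddPoly.sub {p q : R[X]} (hp : IsOddPoly p) (hq : IsOddPoly q) : IsOddPoly (p - q) := by
  rw [IsOddPoly, sub_comp, hp, hq, neg_sub_neg, neg_sub]

lemma derivative_comp_neg_X (p : R[X]) :
    derivative (p.comp (-X)) = -(derivative p).comp (-X) := by
  simp [derivative_comp]

lemma IsOddPoly.derivative {p : R[X]} (hp : IsOddPoly p) : IsEvenPoly (derivative p) := by
  have h := derivative_comp_neg_X p
  rwa [hp, derivative_neg, neg_inj, eq_comm] at h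

lemma IsEvenPoly.derivative {p : R[X]} (hp : IsEvenPoly p) : IsOddPoly (derivative p) := by
  have h := derivative_comp_neg_X p
  rw [hp] at h
  exact (neg_eq_iff_eq_neg.mpr h).symm

lemma IsOddPoly.eval_neg {p : R[X]} (hp : IsOddPoly p) (x : R) : p.eval (-x) = -p.eval x := by
  simpa using congrArg (eval x) hp

lemma isOddPoly_iff_eval [IsDomain R] [Infinite R] {p : R[X]} :
    IsOddPoly p ↔ ∀ x, p.eval (-x) = -p.eval x :=
  ⟨IsOddPoly.eval_neg, fun h => Polynomial.funext fun x => by simp [h]⟩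

lemma eq_zero_of_isEvenPoly_of_isOddPoly [NoZeroDivisors R] [CharZero R] {p : R[X]}
    (he : IsEvenPoly p) (ho : IsOddPoly p) : p = 0 :=
  CharZero.eq_neg_self_iff.mp (he.symm.trans ho)

lemma X_add_one_pow_dvd_comp_neg_X {p : R[X]} {k : ℕ} (h : (X - 1) ^ k ∣ p) :
    (X + 1) ^ k ∣ p.comp (-X) := by
  obtain ⟨q, rfl⟩ := h
  refine ⟨(-1) ^ k * q.comp (-X), ?_⟩
  rw [mul_comp, pow_comp, sub_comp, X_comp, one_comp, ← mul_assoc, ← mul_pow]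
  ring

end Parity

section Divisibility

variable {K : Type*} [Field K]

lemma X_sq_sub_one_pow_dvd [CharZero K] {p : K[X]} {k : ℕ} (hp : IsEvenPoly p ∨ IsOddPoly p)
    (h : (X - 1) ^ k ∣ p) : (X ^ 2 - 1) ^ k ∣ p := by
  have hplus : (X + 1) ^ k ∣ p := by
    have := X_add_one_pow_dvd_comp_neg_X h
    rcases hp with hp | hp <;> rw [hp] at this
    exacts [this, (dvd_neg).mp this]
  have hcop : IsCoprime ((X - 1 : K[X]) ^ k) ((X + 1) ^ k) := by
    refine IsCoprime.pow ?_
    have := isCoprime_X_sub_C_of_isUnit_sub (R := K) (a := 1) (b := -1)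
      (isUnit_iff_ne_zero.mpr (by norm_num))
    simpa [sub_eq_add_neg] using this
  rw [show (X ^ 2 - 1 : K[X]) ^ k = (X - 1) ^ k * (X + 1) ^ k by rw [← mul_pow]; ring]
  exact hcop.mul_dvd h hplus

lemma X_sub_one_sq_dvd {p : K[X]} (h0 : p.eval 1 = 0) (h1 : (derivative p).eval 1 = 0) :
    (X - 1) ^ 2 ∣ p := by
  rcases eq_or_ne p 0 with rfl | hp
  · exact dvd_zero _
  · have := (one_lt_rootMultiplicity_iff_isRoot hp).mpr ⟨h0, h1⟩
    simpa using (le_rootMultiplicity_iff hp).mp this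

end Divisibility

lemma IsOddPoly.isEvenPoly_Dop {p : ℝ[X]} (hp : IsOddPoly p) : IsEvenPoly (Dop p) :=
  isEvenPoly_one_sub_X_sq.mul hp.derivative

lemma IsEvenPoly.isOddPoly_Dop {p : ℝ[X]} (hp : IsEvenPoly p) : IsOddPoly (Dop p) :=
  isEvenPoly_one_sub_X_sq.mul_isOddPoly hp.derivative

lemma IsOddPoly.isEvenPoly_Dop_iterate_odd {p : ℝ[X]} (hp : IsOddPoly p) (l : ℕ) :
    IsEvenPoly (Dop^[2 * l + 1] p) := by
  induction l with
  | zero => exact hp.isEvenPoly_Dop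
  | succ l ih =>
    rw [show 2 * (l + 1) + 1 = 2 * l + 1 + 1 + 1 by ring, Function.iterate_succ_apply',
      Function.iterate_succ_apply']
    exact ih.isOddPoly_Dop.isEvenPoly_Dop

lemma eval_one_Dop (p : ℝ[X]) : (Dop p).eval 1 = 0 := by simp [Dop]

lemma eval_one_Dop_iterate_succ (p : ℝ[X]) (i : ℕ) : (Dop^[i + 1] p).eval 1 = 0 := by
  rw [Function.iterate_succ_apply']
  exact eval_one_Dop _

lemma eval_one_derivative_Dop (p : ℝ[X]) :
    (derivative (Dop p)).eval 1 = -2 * (derivative p).eval 1 := by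
  norm_num [Dop, derivative_mul]

lemma eval_one_derivative_Dop_iterate (p : ℝ[X]) (i : ℕ) :
    (derivative (Dop^[i] p)).eval 1 = (-2) ^ i * (derivative p).eval 1 := by
  induction i with
  | zero => simp
  | succ i ih =>
    rw [Function.iterate_succ_apply', eval_one_derivative_Dop, ih, pow_succ]
    ring

lemma natDegree_Dop_le (p : ℝ[X]) : (Dop p).natDegree ≤ p.natDegree + 1 := by
  rcases Nat.eq_zero_or_pos p.natDegree with hp | hp
  · simp [Dop, derivative_of_natDegree_zero hp]
  · refine natDegree_mul_le.trans ?_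
    have h1 : (1 - X ^ 2 : ℝ[X]).natDegree ≤ 2 := (natDegree_sub_le _ _).trans (by simp)
    have h2 := natDegree_derivative_le p
    omega

lemma natDegree_Dop_iterate_le (p : ℝ[X]) (i : ℕ) :
    (Dop^[i] p).natDegree ≤ p.natDegree + i := by
  induction i with
  | zero => simp
  | succ i ih =>
    rw [Function.iterate_succ_apply']
    have := natDegree_Dop_le (Dop^[i] p)
    omega

lemma Dop_iterate_zero (i : ℕ) : Dop^[i] 0 = 0 :=
  Function.iterate_fixed (by simp [Dop]) i

section Antiderivative

variable {K : Type*} [Field K]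

noncomputable def antideriv (p : K[X]) : K[X] :=
  ∑ k ∈ Finset.range (p.natDegree + 1), C (p.coeff k / (k + 1)) * X ^ (k + 1)

lemma derivative_antideriv [CharZero K] (p : K[X]) : derivative (antideriv p) = p := by
  conv_rhs => rw [p.as_sum_range_C_mul_X_pow]
  rw [antideriv, derivative_sum]
  refine Finset.sum_congr rfl fun k _ => ?_
  rw [derivative_C_mul_X_pow, Nat.add_sub_cancel, Nat.cast_add_one,
    div_mul_cancel₀ _ k.cast_add_one_ne_zero]

lemma eval_zero_antideriv (p : K[X]) : (antideriv p).eval 0 = 0 := by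
  simp [antideriv, eval_finsetSum]

lemma natDegree_antideriv_le (p : K[X]) : (antideriv p).natDegree ≤ p.natDegree + 1 :=
  natDegree_sum_le_of_forall_le _ _ fun k hk =>
    (natDegree_C_mul_X_pow_le _ _).trans (by simpa [Nat.lt_succ_iff] using hk)

lemma IsEvenPoly.isOddPoly_antideriv [CharZero K] {p : K[X]} (hp : IsEvenPoly p) :
    IsOddPoly (antideriv p) := by
  set P := antideriv p
  obtain ⟨c, hc⟩ : ∃ c, P.comp (-X) + P = C c := by
    refine ⟨_, eq_C_of_derivative_eq_zero ?_⟩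
    rw [derivative_add, derivative_comp_neg_X, derivative_antideriv, hp, neg_add_cancel]
  have hc0 : c = 0 := by
    simpa [eval_zero_antideriv, P] using (congrArg (eval 0) hc).symm
  rw [IsOddPoly, eq_neg_iff_add_eq_zero, hc, hc0, C_0]

end Antiderivative

section Linearization

noncomputable def linearization (p : ℝ[X]) : ℝ[X] := Dop p + 2 * X * p

lemma linearization_sub (p q : ℝ[X]) :
    linearization (p - q) = linearization p - linearization q := by
  simp only [linearization, Dop, derivative_sub]
  ring

lemma linearization_one_sub_X_sq_mul (q : ℝ[X]) :
    linearization ((1 - X ^ 2) * q) = (X ^ 2 - 1) ^ 2 * derivative q := by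
  simp only [linearization, Dop, derivative_mul, derivative_sub, derivative_one,
    derivative_X_pow, Nat.cast_ofNat, map_ofNat C 2]
  ring

lemma eq_zero_of_linearization_eq_zero {p : ℝ[X]} (hp : IsOddPoly p) (h1 : p.eval 1 = 0)
    (hL : linearization p = 0) : p = 0 := by
  obtain ⟨q, rfl⟩ : X ^ 2 - 1 ∣ p := by
    simpa using X_sq_sub_one_pow_dvd (k := 1) (Or.inr hp) (by rwa [pow_one, ← C_1, dvd_iff_isRoot])
  have hq : derivative q = 0 := by
    have hne : (X ^ 2 - 1 : ℝ[X]) ^ 2 ≠ 0 := pow_ne_zero _ (X_pow_sub_C_ne_zero two_pos 1)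
    rw [show (X ^ 2 - 1) * q = (1 - X ^ 2) * -q by ring, linearization_one_sub_X_sq_mul,
      derivative_neg, mul_neg, neg_eq_zero] at hL
    exact (mul_eq_zero.mp hL).resolve_left hne
  rw [eq_C_of_derivative_eq_zero hq] at hp ⊢
  refine eq_zero_of_isEvenPoly_of_isOddPoly ?_ hp
  simp [IsEvenPoly, mul_comp]

end Linearization

section ParitySums

variable {M : Type*} [AddCommMonoid M]

lemma sum_range_two_mul_add_two_of_even (f : ℕ → M) (hf : ∀ i, Even i → f i = 0) (n : ℕ) :
    ∑ i ∈ Finset.range (2 * n + 2), f i = ∑ l ∈ Finset.range (n + 1), f (2 * l + 1) := by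
  induction n with
  | zero => simp [Finset.sum_range_succ, hf 0 ⟨0, rfl⟩]
  | succ n ih =>
    rw [show 2 * (n + 1) + 2 = 2 * n + 2 + 1 + 1 by ring, Finset.sum_range_succ,
      Finset.sum_range_succ, ih, hf _ ⟨n + 1, by ring⟩, add_zero, Finset.sum_range_succ _ (n + 1)]
    rfl

lemma sum_range_two_mul_add_one_of_odd (f : ℕ → M) (hf : ∀ i, Odd i → f i = 0) (n : ℕ) :
    ∑ i ∈ Finset.range (2 * n + 1), f i = ∑ l ∈ Finset.range (n + 1), f (2 * l) := by
  induction n with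
  | zero => simp
  | succ n ih =>
    rw [show 2 * (n + 1) + 1 = 2 * n + 1 + 1 + 1 by ring, Finset.sum_range_succ,
      Finset.sum_range_succ, ih, hf _ ⟨n, rfl⟩, add_zero, Finset.sum_range_succ _ (n + 1)]
    rfl

end ParitySums

section Reduction

variable (A : ℕ → ℝ[X])

noncomputable def oneSubSq (k : ℕ) : ℝ[X] :=
  (if k = 0 then 1 else 0) - ∑ a ∈ Finset.range (k + 1), A a * A (k - a)

noncomputable def defectTerm (l k : ℕ) : ℝ[X] :=
  Dop^[2 * l + 1] (A k) - (4 : ℝ) ^ l • oneSubSq A k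

/-- The `d^{2n+1}`-coefficient of `sinh(dD)A - ε(d)(1 - A²)`. -/
noncomputable def defect (n : ℕ) : ℝ[X] :=
  ∑ l ∈ Finset.range (n + 1), ((2 * l + 1).factorial : ℝ)⁻¹ • defectTerm A l (n - l)

lemma seriesOfA_two_mul (a : ℕ) : seriesOfA A (2 * a) = A a := by
  simp [seriesOfA]

lemma seriesOfA_of_odd {i : ℕ} (hi : Odd i) : seriesOfA A i = 0 := by
  simp [seriesOfA, Nat.odd_iff.mp hi]

lemma oneMinusSq_of_odd {k : ℕ} (hk : Odd k) : oneMinusSq A k = 0 := by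
  rw [oneMinusSq, if_neg (by rintro rfl; simp at hk), Finset.sum_eq_zero, sub_zero]
  intro i hi
  rcases Nat.even_or_odd i with he | ho
  · rw [seriesOfA_of_odd A (i := k - i)
      (Nat.Odd.sub_even (Finset.mem_range_succ_iff.mp hi) hk he), mul_zero]
  · rw [seriesOfA_of_odd A ho, zero_mul]

lemma oneMinusSq_two_mul (k : ℕ) : oneMinusSq A (2 * k) = oneSubSq A k := by
  rw [oneMinusSq, oneSubSq, sum_range_two_mul_add_one_of_odd _
    (fun i hi => by rw [seriesOfA_of_odd A hi, zero_mul])]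
  congr 1
  · simp
  · refine Finset.sum_congr rfl fun a ha => ?_
    rw [← Nat.mul_sub, seriesOfA_two_mul, seriesOfA_two_mul]

lemma sinhCoeff_of_even {i : ℕ} (hi : Even i) : sinhCoeff i = 0 := by
  simp [sinhCoeff, Nat.not_odd_iff_even.mpr hi]

lemma sinhCoeff_two_mul_add_one (l : ℕ) :
    sinhCoeff (2 * l + 1) = ((2 * l + 1).factorial : ℝ)⁻¹ := by
  simp [sinhCoeff]

lemma epsCoeff_of_even {j : ℕ} (hj : Even j) : epsCoeff j = 0 := by
  simp [epsCoeff, Nat.not_odd_iff_even.mpr hj]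

lemma epsCoeff_two_mul_add_one (l : ℕ) :
    epsCoeff (2 * l + 1) = ((2 * l + 1).factorial : ℝ)⁻¹ * 4 ^ l := by
  rw [epsCoeff, if_pos (odd_two_mul_add_one l), pow_succ, pow_mul]
  field_simp
  ring

lemma formalEquation_two_mul (n : ℕ) :
    ∑ i ∈ Finset.range (2 * n + 1), sinhCoeff i • Dop^[i] (seriesOfA A (2 * n - i))
      = ∑ j ∈ Finset.range (2 * n + 1), epsCoeff j • oneMinusSq A (2 * n - j) := by
  have hodd {i : ℕ} (hi : i ∈ Finset.range (2 * n + 1)) (ho : Odd i) : Odd (2 * n - i) :=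
    Nat.Even.sub_odd (Finset.mem_range_succ_iff.mp hi) (even_two_mul n) ho
  rw [Finset.sum_eq_zero, Finset.sum_eq_zero]
  · intro j hj
    rcases Nat.even_or_odd j with he | ho
    · rw [epsCoeff_of_even he, zero_smul]
    · rw [oneMinusSq_of_odd A (hodd hj ho), smul_zero]
  · intro i hi
    rcases Nat.even_or_odd i with he | ho
    · rw [sinhCoeff_of_even he, zero_smul]
    · rw [seriesOfA_of_odd A (hodd hi ho), Dop_iterate_zero, smul_zero]

lemma formalEquation_two_mul_add_one_iff (n : ℕ) :
    ∑ i ∈ Finset.range (2 * n + 1 + 1), sinhCoeff i • Dop^[i] (seriesOfA A (2 * n + 1 - i))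
      = ∑ j ∈ Finset.range (2 * n + 1 + 1), epsCoeff j • oneMinusSq A (2 * n + 1 - j) ↔
    defect A n = 0 := by
  rw [sum_range_two_mul_add_two_of_even _ (fun i hi => by rw [sinhCoeff_of_even hi, zero_smul]),
    sum_range_two_mul_add_two_of_even _ (fun j hj => by rw [epsCoeff_of_even hj, zero_smul]),
    ← sub_eq_zero, ← Finset.sum_sub_distrib, defect]
  refine Eq.congr_left (Finset.sum_congr rfl fun l hl => ?_)
  rw [Nat.add_sub_add_right, ← Nat.mul_sub, seriesOfA_two_mul, oneMinusSq_two_mul,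
    sinhCoeff_two_mul_add_one, epsCoeff_two_mul_add_one, defectTerm, smul_sub, mul_smul]

lemma formalEquation_iff :
    (∀ m : ℕ, ∑ i ∈ Finset.range (m + 1), sinhCoeff i • Dop^[i] (seriesOfA A (m - i))
      = ∑ j ∈ Finset.range (m + 1), epsCoeff j • oneMinusSq A (m - j)) ↔
    ∀ n, defect A n = 0 := by
  refine ⟨fun h n => (formalEquation_two_mul_add_one_iff A n).mp (h _), fun h m => ?_⟩
  obtain ⟨n, rfl | rfl⟩ := Nat.even_or_odd' m
  · exact formalEquation_two_mul A n
  · exact (formalEquation_two_mul_add_one_iff A n).mpr (h n)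

end Reduction

section Recursion

variable (A : ℕ → ℝ[X])

noncomputable def forcing (m : ℕ) : ℝ[X] :=
  -(∑ l ∈ Finset.range (m + 1), ((2 * l + 3).factorial : ℝ)⁻¹ • defectTerm A (l + 1) (m - l)
    + ∑ a ∈ Finset.range m, A (a + 1) * A (m - a))

variable {A}

lemma defect_zero (h0 : A 0 = X) : defect A 0 = 0 := by
  simp [defect, defectTerm, oneSubSq, h0, Dop, sq]

lemma oneSubSq_succ (h0 : A 0 = X) (m : ℕ) :
    oneSubSq A (m + 1) = -(2 * X * A (m + 1)) - ∑ a ∈ Finset.range m, A (a + 1) * A (m - a) := by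
  rw [oneSubSq, Finset.sum_range_succ, Finset.sum_range_succ', if_neg m.succ_ne_zero]
  simp only [Nat.sub_self, Nat.sub_zero, Nat.add_sub_add_right, h0]
  ring

lemma defect_succ (h0 : A 0 = X) (m : ℕ) :
    defect A (m + 1) = linearization (A (m + 1)) - forcing A m := by
  rw [defect, Finset.sum_range_succ', forcing, linearization]
  simp only [show ∀ l, 2 * (l + 1) + 1 = 2 * l + 3 from fun l => rfl, Nat.add_sub_add_right]
  simp only [defectTerm, oneSubSq_succ h0, mul_zero, zero_add, Nat.sub_zero, Nat.factorial_one,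
    Nat.cast_one, inv_one, pow_zero, one_smul, Function.iterate_one]
  abel

end Recursion

section Estimates

variable {A : ℕ → ℝ[X]} {k : ℕ}

lemma isEvenPoly_oneSubSq (hodd : ∀ j ≤ k, IsOddPoly (A j)) : IsEvenPoly (oneSubSq A k) := by
  refine IsEvenPoly.sub ?_ (isEvenPoly_sum _ fun a ha =>
    (hodd a (Finset.mem_range_succ_iff.mp ha)).mul (hodd _ (Nat.sub_le _ _)))
  split_ifs <;> simp [IsEvenPoly]

lemma natDegree_oneSubSq_le (hdeg : ∀ j ≤ k, (A j).natDegree ≤ 2 * j + 1) :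
    (oneSubSq A k).natDegree ≤ 2 * k + 2 := by
  refine (natDegree_sub_le_of_le (n := 2 * k + 2) ?_ ?_).trans (max_self _).le
  · split_ifs <;> simp
  · refine natDegree_sum_le_of_forall_le _ _ fun a ha => ?_
    have hak := Finset.mem_range_succ_iff.mp ha
    refine (natDegree_mul_le_of_le (hdeg a hak) (hdeg _ (Nat.sub_le _ _))).trans ?_
    omega

lemma eval_one_oneSubSq (hA : ∀ j ≤ k, (A j).eval 1 = if j = 0 then 1 else 0) :
    (oneSubSq A k).eval 1 = 0 := by
  have hterm : ∀ a ∈ Finset.range (k + 1),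
      (A a * A (k - a)).eval 1 = if a = 0 then (if k = 0 then 1 else 0) else 0 := by
    intro a ha
    rw [eval_mul, hA a (Finset.mem_range_succ_iff.mp ha), hA _ (Nat.sub_le _ _)]
    split_ifs <;> simp_all
  rw [oneSubSq, eval_sub, eval_finsetSum, Finset.sum_congr rfl hterm, Finset.sum_ite_eq',
    if_pos (Finset.mem_range_succ_iff.mpr k.zero_le)]
  split_ifs <;> simp

lemma eval_one_derivative_oneSubSq (hA : ∀ j ≤ k, (A j).eval 1 = if j = 0 then 1 else 0) :
    (derivative (oneSubSq A k)).eval 1 = -2 * (derivative (A k)).eval 1 := by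
  have hterm : ∀ a ∈ Finset.range (k + 1), (derivative (A a * A (k - a))).eval 1 =
      (if k = a then (derivative (A k)).eval 1 else 0) +
        (if 0 = a then (derivative (A k)).eval 1 else 0) := by
    intro a ha
    have hak := Finset.mem_range_succ_iff.mp ha
    rw [derivative_mul, eval_add, eval_mul, eval_mul, hA a hak, hA _ (Nat.sub_le _ _)]
    simp only [show k - a = 0 ↔ k = a by omega]
    clear hA
    split_ifs <;> subst_vars <;> simp_all
  have hconst : derivative (if k = 0 then (1 : ℝ[X]) else 0) = 0 := by split_ifs <;> simp
  rw [oneSubSq, derivative_sub, hconst, derivative_sum, eval_sub, eval_finsetSum,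
    Finset.sum_congr rfl hterm, Finset.sum_add_distrib, Finset.sum_ite_eq, Finset.sum_ite_eq,
    if_pos (Finset.self_mem_range_succ k), if_pos (Finset.mem_range_succ_iff.mpr k.zero_le),
    eval_zero]
  ring

lemma isEvenPoly_defectTerm (hodd : ∀ j ≤ k, IsOddPoly (A j)) (l : ℕ) :
    IsEvenPoly (defectTerm A l k) :=
  ((hodd k le_rfl).isEvenPoly_Dop_iterate_odd l).sub ((isEvenPoly_oneSubSq hodd).smul _)

lemma natDegree_defectTerm_le (hdeg : ∀ j ≤ k, (A j).natDegree ≤ 2 * j + 1) (l : ℕ) :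
    (defectTerm A l k).natDegree ≤ 2 * (k + l) + 2 := by
  refine (natDegree_sub_le_of_le (natDegree_Dop_iterate_le _ _)
    ((natDegree_smul_le _ _).trans (natDegree_oneSubSq_le hdeg))).trans ?_
  have := hdeg k le_rfl
  omega

/-- Both `D^{2l+1}` and `4^l (1 - A²)_k` act at `u = 1` on the derivative of `A k` as
multiplication by `-2·4^l`. -/
lemma X_sub_one_sq_dvd_defectTerm (hA : ∀ j ≤ k, (A j).eval 1 = if j = 0 then 1 else 0)
    (l : ℕ) : (X - 1) ^ 2 ∣ defectTerm A l k := by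
  apply X_sub_one_sq_dvd
  · rw [defectTerm, eval_sub, eval_smul, eval_one_Dop_iterate_succ, eval_one_oneSubSq hA,
      smul_zero, sub_zero]
  · rw [defectTerm, derivative_sub, derivative_smul, eval_sub, eval_smul,
      eval_one_derivative_Dop_iterate, eval_one_derivative_oneSubSq hA, pow_succ, pow_mul,
      smul_eq_mul]
    ring

end Estimates

section Forcing

variable {A : ℕ → ℝ[X]} {m : ℕ}

lemma forcing_congr {B : ℕ → ℝ[X]} (h : ∀ k ≤ m, A k = B k) : forcing A m = forcing B m := by
  have hsq : ∀ k ≤ m, oneSubSq A k = oneSubSq B k := fun k hk => by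
    refine congrArg (_ - ·) (Finset.sum_congr rfl fun a ha => ?_)
    have := Finset.mem_range_succ_iff.mp ha
    rw [h a (by omega), h (k - a) (by omega)]
  refine congrArg Neg.neg (congrArg₂ (· + ·) ?_ ?_)
  · refine Finset.sum_congr rfl fun l hl => ?_
    rw [defectTerm, defectTerm, h _ (Nat.sub_le _ _), hsq _ (Nat.sub_le _ _)]
  · refine Finset.sum_congr rfl fun a ha => ?_
    have := Finset.mem_range.mp ha
    rw [h (a + 1) (by omega), h (m - a) (by omega)]

lemma isEvenPoly_forcing (hodd : ∀ k ≤ m, IsOddPoly (A k)) : IsEvenPoly (forcing A m) := by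
  refine IsEvenPoly.neg (IsEvenPoly.add ?_ ?_)
  · exact isEvenPoly_sum _ fun l hl =>
      (isEvenPoly_defectTerm (fun j hj => hodd j (hj.trans (Nat.sub_le _ _))) _).smul _
  · exact isEvenPoly_sum _ fun a ha => by
      have := Finset.mem_range.mp ha
      exact (hodd _ (by omega)).mul (hodd _ (by omega))

lemma natDegree_forcing_le (hdeg : ∀ k ≤ m, (A k).natDegree ≤ 2 * k + 1) :
    (forcing A m).natDegree ≤ 2 * m + 4 := by
  rw [forcing, natDegree_neg]
  refine natDegree_add_le_of_degree_le ?_ ?_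
  · refine natDegree_sum_le_of_forall_le _ _ fun l hl => (natDegree_smul_le _ _).trans ?_
    have := Finset.mem_range_succ_iff.mp hl
    refine (natDegree_defectTerm_le (fun j hj => hdeg j (hj.trans (Nat.sub_le _ _))) _).trans ?_
    omega
  · refine natDegree_sum_le_of_forall_le _ _ fun a ha => ?_
    have := Finset.mem_range.mp ha
    refine (natDegree_mul_le_of_le (hdeg _ (by omega)) (hdeg _ (by omega))).trans ?_
    omega

lemma X_sub_one_sq_dvd_forcing (hA : ∀ k ≤ m, (A k).eval 1 = if k = 0 then 1 else 0) :
    (X - 1) ^ 2 ∣ forcing A m := by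
  refine (dvd_add ?_ ?_).neg_right
  · refine Finset.dvd_sum fun l hl => ?_
    rw [smul_eq_C_mul]
    exact (X_sub_one_sq_dvd_defectTerm (fun j hj => hA j (hj.trans (Nat.sub_le _ _))) _).mul_left _
  · refine Finset.dvd_sum fun a ha => ?_
    have := Finset.mem_range.mp ha
    have hroot : ∀ k, 1 ≤ k → k ≤ m → X - 1 ∣ A k := fun k hk1 hkm => by
      rw [← C_1, dvd_iff_isRoot, IsRoot, hA k hkm, if_neg (by omega)]
    rw [sq]
    exact mul_dvd_mul (hroot _ (by omega) (by omega)) (hroot _ (by omega) (by omega))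

end Forcing

section Construction

noncomputable def nextTerm (A : ℕ → ℝ[X]) (m : ℕ) : ℝ[X] :=
  (1 - X ^ 2) * antideriv (forcing A m /ₘ (X ^ 2 - 1) ^ 2)

lemma monic_X_sq_sub_one_sq : ((X ^ 2 - 1 : ℝ[X]) ^ 2).Monic := by
  simpa using (monic_X_pow_sub_C (1 : ℝ) two_ne_zero).pow 2

lemma isEvenPoly_X_sq_sub_one_sq : IsEvenPoly ((X ^ 2 - 1 : ℝ[X]) ^ 2) := by
  simp [IsEvenPoly]

lemma natDegree_X_sq_sub_one_sq : ((X ^ 2 - 1 : ℝ[X]) ^ 2).natDegree = 4 := by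
  rw [natDegree_pow, ← C_1, natDegree_X_pow_sub_C]

variable {A : ℕ → ℝ[X]} {m : ℕ}

lemma nextTerm_spec (hodd : ∀ k ≤ m, IsOddPoly (A k))
    (hdeg : ∀ k ≤ m, (A k).natDegree ≤ 2 * k + 1)
    (hA : ∀ k ≤ m, (A k).eval 1 = if k = 0 then 1 else 0) :
    linearization (nextTerm A m) = forcing A m ∧ IsOddPoly (nextTerm A m) ∧
      (nextTerm A m).natDegree ≤ 2 * (m + 1) + 1 ∧ (nextTerm A m).eval 1 = 0 := by
  set S := forcing A m /ₘ (X ^ 2 - 1) ^ 2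
  have hS : (X ^ 2 - 1) ^ 2 * S = forcing A m := by
    have hdvd := X_sq_sub_one_pow_dvd (Or.inl (isEvenPoly_forcing hodd))
      (X_sub_one_sq_dvd_forcing hA)
    have := modByMonic_add_div (forcing A m) ((X ^ 2 - 1) ^ 2)
    rwa [(modByMonic_eq_zero_iff_dvd monic_X_sq_sub_one_sq).mpr hdvd, zero_add] at this
  have hSeven : IsEvenPoly S := by
    have h := isEvenPoly_forcing hodd
    rw [IsEvenPoly, ← hS, mul_comp, isEvenPoly_X_sq_sub_one_sq] at h
    exact mul_left_cancel₀ monic_X_sq_sub_one_sq.ne_zero h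
  have hSdeg : S.natDegree ≤ 2 * m := by
    have := natDegree_forcing_le hdeg
    rw [natDegree_divByMonic _ monic_X_sq_sub_one_sq, natDegree_X_sq_sub_one_sq]
    omega
  refine ⟨?_, isEvenPoly_one_sub_X_sq.mul_isOddPoly hSeven.isOddPoly_antideriv, ?_,
    by simp [nextTerm]⟩
  · rw [nextTerm, linearization_one_sub_X_sq_mul, derivative_antideriv, hS]
  · have h1 : (1 - X ^ 2 : ℝ[X]).natDegree ≤ 2 := (natDegree_sub_le _ _).trans (by simp)
    have h2 := natDegree_antideriv_le S
    exact (natDegree_mul_le_of_le h1 h2).trans (by omega)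

/-- The truncation to indices `≤ m` only serves to make the recursion well founded
(see `formalSolution_succ`). -/
noncomputable def formalSolution : ℕ → ℝ[X]
  | 0 => X
  | m + 1 => nextTerm (fun k => if k ≤ m then formalSolution k else 0) m

lemma formalSolution_zero : formalSolution 0 = X := by
  rw [formalSolution]

lemma formalSolution_succ (m : ℕ) :
    formalSolution (m + 1) = nextTerm formalSolution m := by
  rw [formalSolution, nextTerm, nextTerm, forcing_congr fun k hk => if_pos hk]

lemma formalSolution_spec (n : ℕ) :
    IsOddPoly (formalSolution n) ∧ (formalSolution n).natDegree ≤ 2 * n + 1 ∧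
      (formalSolution n).eval 1 = if n = 0 then 1 else 0 := by
  induction n using Nat.strong_induction_on with
  | _ n ih =>
    rcases n with _ | m
    · simp [formalSolution_zero, isOddPoly_X]
    · obtain ⟨-, hodd, hdeg, h1⟩ := nextTerm_spec (m := m) (fun k hk => (ih k (by omega)).1)
        (fun k hk => (ih k (by omega)).2.1) (fun k hk => (ih k (by omega)).2.2)
      rw [formalSolution_succ]
      exact ⟨hodd, hdeg, h1⟩

lemma linearization_formalSolution_succ (m : ℕ) :
    linearization (formalSolution (m + 1)) = forcing formalSolution m := by
  rw [formalSolution_succ]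
  exact (nextTerm_spec (fun k _ => (formalSolution_spec k).1)
    (fun k _ => (formalSolution_spec k).2.1) (fun k _ => (formalSolution_spec k).2.2)).1

lemma defect_formalSolution (n : ℕ) : defect formalSolution n = 0 := by
  rcases n with _ | m
  · exact defect_zero formalSolution_zero
  · rw [defect_succ formalSolution_zero, linearization_formalSolution_succ, sub_self]

lemma isFormalSolution_formalSolution : IsFormalSolution formalSolution := by
  refine ⟨formalSolution_zero, fun n => natDegree_le_iff_degree_le.mp (formalSolution_spec n).2.1,
    fun n => (formalSolution_spec n).1.eval_neg, fun n hn => ?_,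
    (formalEquation_iff _).mpr defect_formalSolution⟩
  have h1 : (formalSolution n).eval 1 = 0 := by
    rw [(formalSolution_spec n).2.2, if_neg (by omega)]
  rw [(formalSolution_spec n).1.eval_neg, h1, neg_zero]
  exact ⟨rfl, rfl⟩

lemma eq_formalSolution {B : ℕ → ℝ[X]} (hB : IsFormalSolution B) : B = formalSolution := by
  obtain ⟨h0, -, hodd, h1, heq⟩ := hB
  have hdefect := (formalEquation_iff B).mp heq
  funext n
  induction n using Nat.strong_induction_on with
  | _ n ih =>
    rcases n with _ | m
    · rw [h0, formalSolution_zero]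
    · have hL : linearization (B (m + 1)) = linearization (formalSolution (m + 1)) := by
        rw [linearization_formalSolution_succ, ← forcing_congr fun k hk => ih k (by omega),
          ← sub_eq_zero, ← defect_succ h0, hdefect]
      refine sub_eq_zero.mp (eq_zero_of_linearization_eq_zero
        ((isOddPoly_iff_eval.mpr (hodd _)).sub (formalSolution_spec _).1) ?_ ?_)
      · rw [eval_sub, (h1 _ m.succ_pos).1, (formalSolution_spec _).2.2, if_neg m.succ_ne_zero,
          sub_zero]
      · rw [linearization_sub, hL, sub_self]

end Construction

end LogisticSeries

theorem stmt_5 : ∃! A : ℕ → Polynomial ℝ, IsFormalSolution A :=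
  ⟨LogisticSeries.formalSolution, LogisticSeries.isFormalSolution_formalSolution,
    fun _ => LogisticSeries.eq_formalSolution⟩
end

section
/- Let K > 0 and let (e_n)_{n≥7} be a sequence of nonnegative real numbers. For n ≥ 7 set e⁺_n = max{e_j : 7 ≤ j ≤ n}; for n ≥ 18 set f_n = Σ_{i=9}^{n−9} e⁺_i·e⁺_{n−i}·(i−1)!·(n−i−1)!/(n−10)! and f⁺_n = max{f_j : 18 ≤ j ≤ n}. If e_{n−1} ≤ (K/n)·(1 + e⁺_{n−3} + f⁺_{n+2}) for all n ≥ 16, then e_n = O(1/n) as n → ∞, i.e. sup_{n≥7} n·e_n < ∞. -/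
/-- `e⁺_n = max{e_j : 7 ≤ j ≤ n}` (as a supremum of the image set). -/
noncomputable def eplus (e : ℕ → ℝ) (n : ℕ) : ℝ := sSup (e '' Set.Icc 7 n)

/-- `f_n = Σ_{i=9}^{n-9} e⁺_i·e⁺_{n-i}·(i-1)!·(n-i-1)!/(n-10)!`. -/
noncomputable def fseq (e : ℕ → ℝ) (n : ℕ) : ℝ :=
  ∑ i ∈ Finset.Icc 9 (n - 9),
    eplus e i * eplus e (n - i) * (Nat.factorial (i - 1) : ℝ) *
      (Nat.factorial (n - i - 1) : ℝ) / (Nat.factorial (n - 10) : ℝ)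

/-- `f⁺_n = max{f_j : 18 ≤ j ≤ n}`. -/
noncomputable def fplus (e : ℕ → ℝ) (n : ℕ) : ℝ := sSup (fseq e '' Set.Icc 18 n)

open Finset Nat

/-!
Put `P = e⁺₁₄ + 1`, `C = 4·8! + 10!` and `M = K (1 + P + C P²)`, and let `g ≥ 1` be the profile with
`g_n² = ∏_{9 < t ≤ n} max 1 (M / t)`. By strong induction `e_n ≤ P g_n`. Two properties of `g` make
the induction step work: it grows fast enough that `(M / n) g_{n-2} ≤ g_n`, which absorbs the
factor `K / n` of the recursion; and `n ↦ g_n² (n-1)!` is log-convex, so the `i`-th term of `f_j`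
is at most `P² g_{j-9} √(8! w_{j,i})` with `w_{j,i} = (i-1)! (j-i-1)! / (j-10)!`, where
`∑_i √(8! w_{j,i}) ≤ C`. As `g` is constant from `⌈M⌉` on, `e` is bounded, and the recursion then
gives `e_n = O(1/n)`.
-/

lemma mul_le_of_logConvex {h ρ : ℕ → ℝ} {N : ℕ} (h0 : ∀ n, N ≤ n → 0 ≤ h n)
    (hstep : ∀ n, N ≤ n → h (n + 1) = ρ n * h n) (hρ : MonotoneOn ρ (Set.Ici N))
    {i k : ℕ} (hi : N ≤ i) (hk : N ≤ k) : h i * h k ≤ h N * h (i + k - N) := by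
  wlog hik : i ≤ k generalizing i k
  · rw [mul_comm, add_comm]
    exact this hk hi (by omega)
  induction i, hi using Nat.le_induction generalizing k with
  | base => rw [Nat.add_sub_cancel_left]
  | succ i hi ih =>
    calc h (i + 1) * h k = ρ i * (h i * h k) := by rw [hstep i hi]; ring
      _ ≤ ρ k * (h i * h k) :=
        mul_le_mul_of_nonneg_right (hρ hi (by simp; omega) (by omega))
          (mul_nonneg (h0 i hi) (h0 k hk))
      _ = h i * h (k + 1) := by rw [hstep k hk]; ring
      _ ≤ h N * h (i + 1 + k - N) := by
        rw [show i + 1 + k - N = i + (k + 1) - N by omega]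
        exact ih (by omega) (by omega)

noncomputable def convWeight (j i : ℕ) : ℝ := (i - 1)! * (j - i - 1)! / (j - 10)!

lemma convWeight_nonneg (j i : ℕ) : 0 ≤ convWeight j i := by
  unfold convWeight; positivity

lemma convWeight_nine (j : ℕ) : convWeight j 9 = 8 ! := by
  have : ((j - 10)! : ℝ) ≠ 0 := by positivity
  simp only [convWeight, show j - 9 - 1 = j - 10 by omega]
  field_simp

lemma convWeight_le_convWeight {j i N : ℕ} (hN : 1 ≤ N) (hi : N ≤ i) (hij : i + N ≤ j) :
    convWeight j i ≤ convWeight j N := by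
  have key := mul_le_of_logConvex (h := fun n => ((n - 1)! : ℝ)) (ρ := fun n => n) (N := N)
    (fun n _ => by positivity)
    (fun n hn => by
      simp only [Nat.add_sub_cancel]
      rw [← Nat.mul_factorial_pred (by omega : n ≠ 0)]
      push_cast; ring)
    (fun a _ b _ hab => by simpa using hab) hi (show N ≤ j - i by omega)
  simp only [show i + (j - i) - N = j - N by omega] at key
  unfold convWeight
  gcongr

lemma convWeight_eleven_le {j : ℕ} (hj : 12 ≤ j) :
    convWeight j 11 ≤ 10 ! / ((j : ℝ) - 11) ^ 2 := by
  have hj' : (12 : ℝ) ≤ j := by exact_mod_cast hj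
  have hfac : ((j - 10)! : ℝ) = ((j : ℝ) - 10) * ((j : ℝ) - 11) * (j - 12)! := by
    rw [show j - 10 = (j - 12) + 1 + 1 by omega, Nat.factorial_succ, Nat.factorial_succ]
    push_cast [hj]
    ring
  rw [convWeight, show j - 11 - 1 = j - 12 by omega, hfac, mul_div_mul_right _ _ (by positivity)]
  exact div_le_div_of_nonneg_left (by positivity) (by nlinarith) (by nlinarith)

/-- Only the four extreme weights are of size `O(1)`; the others are `O(j⁻²)`, so their square
roots sum to `O(1)`. -/
lemma sum_sqrt_convWeight_le {j : ℕ} (hj : 18 ≤ j) :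
    ∑ i ∈ Icc 9 (j - 9), √(8 ! * convWeight j i) ≤ 4 * 8 ! + 10 ! := by
  have hj11 : (0 : ℝ) < j - 11 := by
    have : (18 : ℝ) ≤ j := by exact_mod_cast hj
    linarith
  have hfac : (8 ! : ℝ) ≤ 10 ! := by exact_mod_cast Nat.factorial_le (by norm_num)
  have hsub : Icc 11 (j - 11) ⊆ Icc 9 (j - 9) := Icc_subset_Icc (by norm_num) (by omega)
  have hedge : ∀ i ∈ Icc 9 (j - 9) \ Icc 11 (j - 11), √(8 ! * convWeight j i) ≤ 8 ! := by
    intro i hi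
    obtain ⟨hi9, hij⟩ := mem_Icc.mp (mem_sdiff.mp hi).1
    rw [Real.sqrt_le_left (by positivity), sq]
    gcongr
    simpa [convWeight_nine] using convWeight_le_convWeight (by norm_num) hi9 (by omega)
  have hmid : ∀ i ∈ Icc 11 (j - 11), √(8 ! * convWeight j i) ≤ 10 ! / ((j : ℝ) - 11) := by
    intro i hi
    obtain ⟨hi11, hij⟩ := mem_Icc.mp hi
    rw [Real.sqrt_le_left (by positivity), div_pow, sq (10 ! : ℝ), mul_div_assoc]
    gcongr
    · exact convWeight_nonneg j i
    exact (convWeight_le_convWeight (j := j) (N := 11) (by norm_num) hi11 (by omega)).trans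
      (convWeight_eleven_le (by omega))
  have hcard_edge : #(Icc 9 (j - 9) \ Icc 11 (j - 11)) ≤ 4 := by
    rw [card_sdiff_of_subset hsub, Nat.card_Icc, Nat.card_Icc]; omega
  have hcard_mid : (#(Icc 11 (j - 11)) : ℝ) ≤ (j : ℝ) - 11 := by
    rw [Nat.card_Icc]
    calc ((j - 11 + 1 - 11 : ℕ) : ℝ) ≤ ((j - 11 : ℕ) : ℝ) := by gcongr; omega
      _ = j - 11 := by push_cast [show 11 ≤ j by omega]; ring
  rw [← sum_sdiff hsub]
  gcongr
  · calc _ ≤ #(Icc 9 (j - 9) \ Icc 11 (j - 11)) • (8 ! : ℝ) := sum_le_card_nsmul _ _ _ hedge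
      _ ≤ 4 * 8 ! := by rw [nsmul_eq_mul]; gcongr; exact_mod_cast hcard_edge
  · calc _ ≤ #(Icc 11 (j - 11)) • (10 ! / ((j : ℝ) - 11)) := sum_le_card_nsmul _ _ _ hmid
      _ ≤ ((j : ℝ) - 11) * (10 ! / ((j : ℝ) - 11)) := by
          rw [nsmul_eq_mul]; gcongr
      _ = 10 ! := by field_simp

noncomputable def profileFactor (M : ℝ) (t : ℕ) : ℝ := max 1 (M / t)

noncomputable def sqProfile (M : ℝ) (n : ℕ) : ℝ := ∏ t ∈ Ioc 9 n, profileFactor M t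

noncomputable def profile (M : ℝ) (n : ℕ) : ℝ := √(sqProfile M n)

section Profile

variable (M : ℝ)

lemma one_le_profileFactor (t : ℕ) : 1 ≤ profileFactor M t := le_max_left _ _

lemma one_le_sqProfile (n : ℕ) : 1 ≤ sqProfile M n :=
  one_le_prod fun t _ => one_le_profileFactor M t

lemma sqProfile_succ {n : ℕ} (hn : 9 ≤ n) :
    sqProfile M (n + 1) = sqProfile M n * profileFactor M (n + 1) :=
  prod_Ioc_succ_top hn _

lemma monotone_sqProfile : Monotone (sqProfile M) := fun _ _ hab =>
  prod_le_prod_of_subset_of_one_le (Ioc_subset_Ioc_right hab)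
    (fun t _ => zero_le_one.trans (one_le_profileFactor M t))
    (fun t _ _ => one_le_profileFactor M t)

lemma one_le_profile (n : ℕ) : 1 ≤ profile M n :=
  Real.one_le_sqrt.mpr (one_le_sqProfile M n)

lemma monotone_profile : Monotone (profile M) := fun _ _ hab =>
  Real.sqrt_le_sqrt (monotone_sqProfile M hab)

/-- The profile is constant from `⌈M⌉₊` on, since all later factors equal `1`. -/
lemma exists_profile_le : ∃ B, ∀ n, profile M n ≤ B := by
  refine ⟨profile M ⌈M⌉₊, fun n => ?_⟩
  rcases le_total n ⌈M⌉₊ with hn | hn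
  · exact monotone_profile M hn
  refine le_of_eq (congrArg Real.sqrt (prod_subset (Ioc_subset_Ioc_right hn) ?_).symm)
  intro t ht ht'
  simp only [mem_Ioc, not_and, not_le] at ht ht'
  have htM : M ≤ t := (Nat.le_ceil M).trans (by exact_mod_cast (ht' ht.1).le)
  have htpos : (0 : ℝ) < t := by exact_mod_cast (by omega : 0 < t)
  exact max_eq_left ((div_le_one htpos).mpr htM)

lemma div_mul_profile_sub_two_le {m : ℕ} (hM : 0 ≤ M) (hm : 11 ≤ m) :
    M / m * profile M (m - 2) ≤ profile M m := by
  have hm' : (1 : ℝ) ≤ m - 1 := by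
    have : (11 : ℝ) ≤ m := by exact_mod_cast hm
    linarith
  have hsplit : sqProfile M m =
      sqProfile M (m - 2) * profileFactor M (m - 1) * profileFactor M m := by
    obtain ⟨k, rfl⟩ : ∃ k, m = k + 2 := ⟨m - 2, by omega⟩
    rw [show k + 2 - 2 = k by omega, show k + 2 - 1 = k + 1 by omega,
      show k + 2 = k + 1 + 1 by omega, sqProfile_succ M (by omega), sqProfile_succ M (by omega)]
  have h1 : M / m ≤ profileFactor M (m - 1) := by
    refine le_trans ?_ (le_max_right _ _)
    rw [Nat.cast_sub (by omega), Nat.cast_one]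
    exact div_le_div_of_nonneg_left hM (by linarith) (by linarith)
  have h2 : M / m ≤ profileFactor M m := le_max_right _ _
  rw [profile, profile, ← Real.sqrt_sq (by positivity : 0 ≤ M / m),
    ← Real.sqrt_mul (by positivity), hsplit]
  apply Real.sqrt_le_sqrt
  have := one_le_sqProfile M (m - 2)
  have := one_le_profileFactor M (m - 1)
  calc (M / m) ^ 2 * sqProfile M (m - 2)
      ≤ profileFactor M (m - 1) * profileFactor M m * sqProfile M (m - 2) := by
        rw [sq]; gcongr
    _ = _ := by ring

lemma monotone_mul_profileFactor_succ (hM : 0 ≤ M) :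
    Monotone fun n : ℕ => (n : ℝ) * profileFactor M (n + 1) := by
  intro a b hab
  have hab' : (a : ℝ) ≤ b := by exact_mod_cast hab
  simp only [profileFactor]
  rw [mul_max_of_nonneg _ _ (by positivity), mul_max_of_nonneg _ _ (by positivity), mul_one,
    mul_one, mul_div_left_comm, mul_div_left_comm (b : ℝ)]
  refine max_le_max hab' ?_
  gcongr M * ?_
  rw [div_le_div_iff₀ (by positivity) (by positivity)]
  push_cast
  nlinarith

-- `n ↦ sqProfile M n * (n - 1)!` is log-convex from `n = 9` on.
lemma sqProfile_mul_sqProfile_mul_convWeight_le (hM : 0 ≤ M) {i j : ℕ} (hi : 9 ≤ i)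
    (hij : i + 9 ≤ j) :
    sqProfile M i * sqProfile M (j - i) * convWeight j i ≤ 8 ! * sqProfile M (j - 9) := by
  have key := mul_le_of_logConvex (h := fun n => sqProfile M n * (n - 1)!)
    (ρ := fun n => n * profileFactor M (n + 1)) (N := 9)
    (fun n _ => by have := one_le_sqProfile M n; positivity)
    (fun n hn => by
      simp only [Nat.add_sub_cancel]
      rw [sqProfile_succ M hn, ← Nat.mul_factorial_pred (by omega : n ≠ 0)]
      push_cast; ring)
    ((monotone_mul_profileFactor_succ M hM).monotoneOn _) hi (show 9 ≤ j - i by omega)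
  simp only [show i + (j - i) - 9 = j - 9 by omega, show j - 9 - 1 = j - 10 by omega,
    show 9 - 1 = 8 from rfl, show sqProfile M 9 = 1 from prod_empty] at key
  have hfac : (0 : ℝ) < (j - 10)! := by positivity
  unfold convWeight
  rw [mul_div_assoc', div_le_iff₀ hfac]
  linarith

lemma profile_mul_profile_mul_convWeight_le (hM : 0 ≤ M) {i j : ℕ} (hi : 9 ≤ i)
    (hij : i + 9 ≤ j) :
    profile M i * profile M (j - i) * convWeight j i ≤
      √(8 ! * convWeight j i) * profile M (j - 9) := by
  have hw := convWeight_nonneg j i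
  have hG n := zero_le_one.trans (one_le_sqProfile M n)
  unfold profile
  have h8w : (0 : ℝ) ≤ 8 ! * convWeight j i := mul_nonneg (by positivity) hw
  rw [← Real.sqrt_mul h8w, Real.le_sqrt (by positivity) (mul_nonneg h8w (hG _)), mul_pow, mul_pow,
    Real.sq_sqrt (hG _), Real.sq_sqrt (hG _)]
  calc sqProfile M i * sqProfile M (j - i) * convWeight j i ^ 2
      = (sqProfile M i * sqProfile M (j - i) * convWeight j i) * convWeight j i := by ring
    _ ≤ (8 ! * sqProfile M (j - 9)) * convWeight j i :=
        mul_le_mul_of_nonneg_right (sqProfile_mul_sqProfile_mul_convWeight_le M hM hi hij) hw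
    _ = _ := by ring

lemma sum_profile_mul_profile_mul_convWeight_le (hM : 0 ≤ M) {j : ℕ} (hj : 18 ≤ j) :
    ∑ i ∈ Icc 9 (j - 9), profile M i * profile M (j - i) * convWeight j i ≤
      (4 * 8 ! + 10 !) * profile M (j - 9) :=
  calc _ ≤ ∑ i ∈ Icc 9 (j - 9), √(8 ! * convWeight j i) * profile M (j - 9) :=
        sum_le_sum fun i hi => profile_mul_profile_mul_convWeight_le M hM (mem_Icc.mp hi).1
          (by have := (mem_Icc.mp hi).2; omega)
    _ ≤ _ := by
        rw [← sum_mul]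
        exact mul_le_mul_of_nonneg_right (sum_sqrt_convWeight_le hj)
          (zero_le_one.trans (one_le_profile M _))

end Profile

section Majorants

variable {e : ℕ → ℝ}

lemma le_eplus {k n : ℕ} (hk : 7 ≤ k) (hkn : k ≤ n) : e k ≤ eplus e n :=
  le_csSup ((Set.finite_Icc 7 n).image e).bddAbove ⟨k, ⟨hk, hkn⟩, rfl⟩

lemma eplus_le {n : ℕ} {x : ℝ} (hn : 7 ≤ n) (h : ∀ k, 7 ≤ k → k ≤ n → e k ≤ x) :
    eplus e n ≤ x :=
  csSup_le ⟨e 7, 7, ⟨le_rfl, hn⟩, rfl⟩ fun _ ⟨k, hk, hek⟩ => hek ▸ h k hk.1 hk.2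

lemma eplus_nonneg (he : ∀ n, 0 ≤ e n) (n : ℕ) : 0 ≤ eplus e n :=
  Real.sSup_nonneg fun _ ⟨k, _, hek⟩ => hek ▸ he k

lemma fplus_le {n : ℕ} {x : ℝ} (hn : 18 ≤ n) (h : ∀ j, 18 ≤ j → j ≤ n → fseq e j ≤ x) :
    fplus e n ≤ x :=
  csSup_le ⟨fseq e 18, 18, ⟨le_rfl, hn⟩, rfl⟩ fun _ ⟨j, hj, hfj⟩ => hfj ▸ h j hj.1 hj.2

lemma fseq_eq_sum_convWeight (j : ℕ) :
    fseq e j = ∑ i ∈ Icc 9 (j - 9), eplus e i * eplus e (j - i) * convWeight j i := by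
  unfold fseq convWeight
  refine sum_congr rfl fun i _ => ?_
  ring

variable {M P : ℝ}

lemma eplus_le_mul_profile (hP : 0 ≤ P) {n : ℕ} (hn : 7 ≤ n)
    (hdom : ∀ k, 7 ≤ k → k ≤ n → e k ≤ P * profile M k) : eplus e n ≤ P * profile M n :=
  eplus_le hn fun k hk hkn =>
    (hdom k hk hkn).trans (mul_le_mul_of_nonneg_left (monotone_profile M hkn) hP)

lemma fseq_le_mul_profile (he : ∀ n, 0 ≤ e n) (hM : 0 ≤ M) (hP : 0 ≤ P) {j : ℕ} (hj : 18 ≤ j)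
    (hdom : ∀ k, 7 ≤ k → k ≤ j - 9 → e k ≤ P * profile M k) :
    fseq e j ≤ (4 * 8 ! + 10 !) * P ^ 2 * profile M (j - 9) := by
  have hE : ∀ i, 9 ≤ i → i ≤ j - 9 → eplus e i ≤ P * profile M i := fun i hi hij =>
    eplus_le_mul_profile hP (by omega) fun k hk hki => hdom k hk (hki.trans hij)
  calc fseq e j
      ≤ ∑ i ∈ Icc 9 (j - 9), P * profile M i * (P * profile M (j - i)) * convWeight j i := by
        rw [fseq_eq_sum_convWeight]
        refine sum_le_sum fun i hi => ?_
        obtain ⟨hi9, hij⟩ := mem_Icc.mp hi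
        have := one_le_profile M i
        gcongr
        · exact convWeight_nonneg j i
        · exact eplus_nonneg he _
        · exact hE i hi9 hij
        · exact hE (j - i) (by omega) (by omega)
    _ = P ^ 2 * ∑ i ∈ Icc 9 (j - 9), profile M i * profile M (j - i) * convWeight j i := by
        rw [mul_sum]
        refine sum_congr rfl fun i _ => ?_
        ring
    _ ≤ P ^ 2 * ((4 * 8 ! + 10 !) * profile M (j - 9)) := by
        gcongr
        exact sum_profile_mul_profile_mul_convWeight_le M hM hj
    _ = _ := by ring

lemma le_div_mul_profile_of_forall_lt (he : ∀ n, 0 ≤ e n) {K : ℝ} (hK : 0 ≤ K) (hM : 0 ≤ M)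
    (hP : 0 ≤ P) {m : ℕ} (hm : 15 ≤ m)
    (hrec : e m ≤ K / (m + 1) * (1 + eplus e (m - 2) + fplus e (m + 3)))
    (hdom : ∀ k, 7 ≤ k → k < m → e k ≤ P * profile M k) :
    e m ≤ K * (1 + P + (4 * 8 ! + 10 !) * P ^ 2) / (m + 1) * profile M (m - 2) := by
  have hE : eplus e (m - 2) ≤ P * profile M (m - 2) :=
    eplus_le_mul_profile hP (by omega) fun k hk hkm => hdom k hk (by omega)
  have hF : fplus e (m + 3) ≤ (4 * 8 ! + 10 !) * P ^ 2 * profile M (m - 2) :=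
    fplus_le (by omega) fun j hj hjm =>
      (fseq_le_mul_profile he hM hP hj fun k hk hkj => hdom k hk (by omega)).trans
        (mul_le_mul_of_nonneg_left (monotone_profile M (by omega)) (by positivity))
  have h1 := one_le_profile M (m - 2)
  calc e m ≤ K / (m + 1) * (1 + eplus e (m - 2) + fplus e (m + 3)) := hrec
    _ ≤ K / (m + 1) * ((1 + P + (4 * 8 ! + 10 !) * P ^ 2) * profile M (m - 2)) := by
        gcongr
        nlinarith
    _ = _ := by ring

lemma le_mul_profile (he : ∀ n, 0 ≤ e n) {K : ℝ} (hK : 0 ≤ K) (hP14 : eplus e 14 ≤ P)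
    (hP : 1 ≤ P) (hKM : K * (1 + P + (4 * 8 ! + 10 !) * P ^ 2) ≤ M)
    (hrec : ∀ m, 15 ≤ m → e m ≤ K / (m + 1) * (1 + eplus e (m - 2) + fplus e (m + 3)))
    (m : ℕ) (hm : 7 ≤ m) : e m ≤ P * profile M m := by
  have hM : 0 ≤ M := le_trans (by positivity) hKM
  induction m using Nat.strong_induction_on with
  | _ m ih =>
    rcases le_or_gt m 14 with hm14 | hm14
    · calc e m ≤ P := (le_eplus hm hm14).trans hP14
        _ ≤ P * profile M m := le_mul_of_one_le_right (by linarith) (one_le_profile M m)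
    have := one_le_profile M (m - 2)
    calc e m ≤ K * (1 + P + (4 * 8 ! + 10 !) * P ^ 2) / (m + 1) * profile M (m - 2) :=
          le_div_mul_profile_of_forall_lt he hK hM (by linarith) (by omega) (hrec m (by omega))
            fun k hk hkm => ih k hkm hk
      _ ≤ M / m * profile M (m - 2) := by gcongr; linarith
      _ ≤ profile M m := div_mul_profile_sub_two_le M hM (by omega)
      _ ≤ P * profile M m := le_mul_of_one_le_left (by linarith [one_le_profile M m]) hP

end Majorants

theorem stmt_12 (K : ℝ) (hK : 0 < K) (e : ℕ → ℝ) (he : ∀ n : ℕ, 0 ≤ e n)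
    (hrec : ∀ n : ℕ, 16 ≤ n →
      e (n - 1) ≤ K / (n : ℝ) * (1 + eplus e (n - 3) + fplus e (n + 2))) :
    ∃ B : ℝ, ∀ n : ℕ, 7 ≤ n → (n : ℝ) * e n ≤ B := by
  have hrec' : ∀ m, 15 ≤ m → e m ≤ K / (m + 1) * (1 + eplus e (m - 2) + fplus e (m + 3)) :=
    fun m hm => by simpa [show m + 1 - 3 = m - 2 by omega] using hrec (m + 1) (by omega)
  set P := eplus e 14 + 1
  have hP : 1 ≤ P := by linarith [eplus_nonneg he 14]
  set M := K * (1 + P + (4 * 8 ! + 10 !) * P ^ 2)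
  have hM : 0 ≤ M := by positivity
  have hdom := le_mul_profile he hK.le (by linarith) hP le_rfl hrec'
  obtain ⟨B, hB⟩ := exists_profile_le M
  have hB0 : 0 ≤ B := zero_le_one.trans ((one_le_profile M 0).trans (hB 0))
  refine ⟨14 * (P * B) + M * B, fun n hn => ?_⟩
  rcases le_or_gt n 14 with hn14 | hn14
  · have : (n : ℝ) * e n ≤ 14 * (P * B) :=
      mul_le_mul (by exact_mod_cast hn14) ((hdom n hn).trans (by gcongr; exact hB n)) (he n)
        (by norm_num)
    linarith [mul_nonneg hM hB0]
  · have hen : e n ≤ M / (n + 1) * B :=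
      (le_div_mul_profile_of_forall_lt he hK.le hM (by linarith) (by omega) (hrec' n (by omega))
        fun k hk _ => hdom k hk).trans (by gcongr; exact hB _)
    rw [div_mul_eq_mul_div, le_div_iff₀ (by positivity)] at hen
    nlinarith [he n, mul_nonneg hM hB0, mul_nonneg (by linarith : (0 : ℝ) ≤ P) hB0]
end

section
/- Let c > 0 and M ≥ 0, and let (d_n)_{n≥0}, (g_n)_{n≥0}, (h_n)_{n≥0} be real sequences such that g_n ≥ c and |h_n| ≤ M for all n, d_{n+1} = −(1 + g_n)·d_n − h_n for all n, and d_n → 0 as n → ∞. Then |d_n| ≤ M/c for all n; more precisely, |d_n| ≤ Σ_{k≥n} |h_k| / Π_{i=n}^{k} (1 + g_i) ≤ M·Σ_{j≥1} (1+c)^{−j} = M/c. -/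
/-!
Dividing the recurrence by `1 + g n` gives
`|d n| ≤ |h n| / (1 + g n) + |d (n + 1)| / (1 + g n)`, and iterating this `K` times bounds
`|d n|` by the first `K` terms of the series plus `|d (n + K)| / ∏ (1 + g i)`. Since every factor
is at least `1`, the remainder is at most `|d (n + K)|`, which tends to `0`. Each term of the
series is at most `M (1 + c)^{-(k+1)}`, and this geometric series sums to `M / c`.
-/

open Filter Finset Topology

section DampedRecurrence

variable {a d h : ℕ → ℝ}

theorem mul_abs_le_abs_succ_add_abs {n : ℕ} (ha : 0 ≤ a n)
    (hrec : d (n + 1) = -a n * d n - h n) : a n * |d n| ≤ |d (n + 1)| + |h n| :=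
  calc a n * |d n| = |-d (n + 1) - h n| := by
        rw [show -d (n + 1) - h n = a n * d n by rw [hrec]; ring, abs_mul, abs_of_nonneg ha]
    _ ≤ |d (n + 1)| + |h n| := by simpa only [abs_neg] using abs_sub (-d (n + 1)) (h n)

theorem abs_le_sum_add_abs_div_prod (ha : ∀ i, 0 < a i)
    (hd : ∀ i, a i * |d i| ≤ |d (i + 1)| + |h i|) (n K : ℕ) :
    |d n| ≤ ∑ k ∈ range K, |h (n + k)| / ∏ i ∈ Icc n (n + k), a i
      + |d (n + K)| / ∏ i ∈ Ico n (n + K), a i := by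
  induction K with
  | zero => simp
  | succ K ih =>
    set P := ∏ i ∈ Ico n (n + K), a i
    have hP : 0 < P := prod_pos fun i _ => ha i
    have hIcc : ∏ i ∈ Icc n (n + K), a i = P * a (n + K) := by
      rw [← Ico_add_one_right_eq_Icc, prod_Ico_succ_top (Nat.le_add_right n K)]
    have hIco : ∏ i ∈ Ico n (n + (K + 1)), a i = P * a (n + K) := by
      rw [← add_assoc, Ico_add_one_right_eq_Icc, hIcc]
    have hstep : |d (n + K)| / P ≤ (|h (n + K)| + |d (n + K + 1)|) / (P * a (n + K)) := by
      rw [div_le_div_iff₀ hP (mul_pos hP (ha _)), mul_comm P, ← mul_assoc, mul_comm _ (a _)]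
      gcongr
      linarith [hd (n + K)]
    rw [sum_range_succ, hIcc, hIco, ← add_assoc]
    rw [add_div] at hstep
    linarith

theorem abs_le_tsum_of_tendsto_zero (ha : ∀ i, 1 ≤ a i)
    (hd : ∀ i, a i * |d i| ≤ |d (i + 1)| + |h i|) (hlim : Tendsto d atTop (𝓝 0)) (n : ℕ)
    (hs : Summable fun k => |h (n + k)| / ∏ i ∈ Icc n (n + k), a i) :
    |d n| ≤ ∑' k, |h (n + k)| / ∏ i ∈ Icc n (n + k), a i := by
  have htail : Tendsto (fun K => |d (n + K)|) atTop (𝓝 0) := by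
    simpa [Function.comp_def, add_comm] using (hlim.comp (tendsto_add_atTop_nat n)).abs
  refine ge_of_tendsto' (by simpa using hs.hasSum.tendsto_sum_nat.add htail) fun K => ?_
  have hP : 1 ≤ ∏ i ∈ Ico n (n + K), a i := one_le_prod fun i _ => ha i
  have hK := abs_le_sum_add_abs_div_prod (fun i => one_pos.trans_le (ha i)) hd n K
  linarith [div_le_self (abs_nonneg (d (n + K))) hP]

theorem pow_succ_le_prod_Icc {b : ℝ} (hb : 0 ≤ b) (hba : ∀ i, b ≤ a i) (n k : ℕ) :
    b ^ (k + 1) ≤ ∏ i ∈ Icc n (n + k), a i :=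
  calc b ^ (k + 1) = ∏ _i ∈ Icc n (n + k), b := by
        rw [prod_const, Nat.card_Icc, add_assoc, Nat.add_sub_cancel_left]
    _ ≤ ∏ i ∈ Icc n (n + k), a i := prod_le_prod (fun _ _ => hb) fun i _ => hba i

theorem abs_div_prod_Icc_le {b M : ℝ} (hb : 0 < b) (hba : ∀ i, b ≤ a i) (hh : ∀ i, |h i| ≤ M)
    (n k : ℕ) : |h (n + k)| / ∏ i ∈ Icc n (n + k), a i ≤ M * b⁻¹ ^ (k + 1) :=
  calc |h (n + k)| / ∏ i ∈ Icc n (n + k), a i ≤ |h (n + k)| / b ^ (k + 1) :=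
        div_le_div_of_nonneg_left (abs_nonneg _) (pow_pos hb _) (pow_succ_le_prod_Icc hb.le hba n k)
    _ ≤ M / b ^ (k + 1) := by gcongr; exact hh _
    _ = M * b⁻¹ ^ (k + 1) := by rw [inv_pow, div_eq_mul_inv]

end DampedRecurrence

theorem hasSum_inv_one_add_pow_succ {c : ℝ} (hc : 0 < c) :
    HasSum (fun j : ℕ => (1 + c)⁻¹ ^ (j + 1)) c⁻¹ := by
  have hr : (1 + c)⁻¹ < 1 := inv_lt_one_of_one_lt₀ (by linarith)
  have hsum : (1 + c)⁻¹ * (1 - (1 + c)⁻¹)⁻¹ = c⁻¹ := by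
    rw [← mul_inv, mul_sub, mul_one, mul_inv_cancel₀ (by positivity), add_sub_cancel_left]
  simpa only [← pow_succ', hsum] using
    (hasSum_geometric_of_lt_one (by positivity) hr).mul_left (1 + c)⁻¹

theorem stmt_17_general (c M : ℝ) (hc : 0 < c)
    (d g h : ℕ → ℝ) (hg : ∀ n : ℕ, c ≤ g n) (hh : ∀ n : ℕ, |h n| ≤ M)
    (hrec : ∀ n : ℕ, d (n + 1) = -(1 + g n) * d n - h n)
    (hlim : Filter.Tendsto d Filter.atTop (nhds 0)) :
    ∀ n : ℕ,
      |d n| ≤ (∑' k : ℕ, |h (n + k)| / ∏ i ∈ Finset.Icc n (n + k), (1 + g i)) ∧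
      (∑' k : ℕ, |h (n + k)| / ∏ i ∈ Finset.Icc n (n + k), (1 + g i))
          ≤ M * ∑' j : ℕ, ((1 + c)⁻¹) ^ (j + 1) ∧
      M * (∑' j : ℕ, ((1 + c)⁻¹) ^ (j + 1)) = M / c ∧
      |d n| ≤ M / c := by
  have hca : ∀ i, 1 + c ≤ 1 + g i := fun i => by linarith [hg i]
  have hd : ∀ i, (1 + g i) * |d i| ≤ |d (i + 1)| + |h i| := fun i =>
    mul_abs_le_abs_succ_add_abs (a := fun i => 1 + g i) (by linarith [hg i]) (hrec i)
  have hgeo := (hasSum_inv_one_add_pow_succ hc).mul_left M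
  have hMc : M * ∑' j : ℕ, ((1 + c)⁻¹) ^ (j + 1) = M / c := by
    rw [← tsum_mul_left, hgeo.tsum_eq, div_eq_mul_inv]
  intro n
  have hterm := abs_div_prod_Icc_le (by linarith) hca hh n
  have hs : Summable fun k => |h (n + k)| / ∏ i ∈ Icc n (n + k), (1 + g i) :=
    hgeo.summable.of_nonneg_of_le
      (fun k => div_nonneg (abs_nonneg _) (prod_nonneg fun i _ => by linarith [hg i])) hterm
  have hle1 := abs_le_tsum_of_tendsto_zero (fun i => by linarith [hg i]) hd hlim n hs
  have hle2 : ∑' k, |h (n + k)| / ∏ i ∈ Icc n (n + k), (1 + g i)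
      ≤ M * ∑' j : ℕ, ((1 + c)⁻¹) ^ (j + 1) := by
    rw [← tsum_mul_left]
    exact hs.tsum_le_tsum hterm hgeo.summable
  exact ⟨hle1, hle2, hMc, hle1.trans (hle2.trans hMc.le)⟩

theorem stmt_17 (c M : ℝ) (hc : 0 < c) (hM : 0 ≤ M)
    (d g h : ℕ → ℝ) (hg : ∀ n : ℕ, c ≤ g n) (hh : ∀ n : ℕ, |h n| ≤ M)
    (hrec : ∀ n : ℕ, d (n + 1) = -(1 + g n) * d n - h n)
    (hlim : Filter.Tendsto d Filter.atTop (nhds 0)) :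
    ∀ n : ℕ,
      |d n| ≤ (∑' k : ℕ, |h (n + k)| / ∏ i ∈ Finset.Icc n (n + k), (1 + g i)) ∧
      (∑' k : ℕ, |h (n + k)| / ∏ i ∈ Finset.Icc n (n + k), (1 + g i))
          ≤ M * ∑' j : ℕ, ((1 + c)⁻¹) ^ (j + 1) ∧
      M * (∑' j : ℕ, ((1 + c)⁻¹) ^ (j + 1)) = M / c ∧
      |d n| ≤ M / c :=
  stmt_17_general c M hc d g h hg hh hrec hlim
end
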